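/- arXiv:1407.4292 — 9 statements merged into one kernel-verified Lean document; each statement's English description precedes it below -/
import Mathlib

section
/- If B is compact and B ⊆ A + int(C), then there exists a 0-neighborhood U such that B + U ⊆ A + C. That is, for compact B, A < B implies A ≪ B. -/
open Pointwise Set

theorem stmt_2_general {Y : Type*} [AddCommGroup Y] [TopologicalSpace Y] [IsTopologicalAddGroup Y]
    (C : Set Y) (A B : Set Y)
    (hBcpt : IsCompact B) (hlt : B ⊆ A + interior C) :
    ∃ U ∈ nhds (0 : Y), B + U ⊆ A + C := by
  obtain ⟨U, hU, hBU⟩ := compact_open_separated_add_right hBcpt isOpen_interior.add_left hlt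
  exact ⟨U, hU, hBU.trans (add_subset_add_left interior_subset)⟩

theorem stmt_2 {Y : Type*} [AddCommGroup Y] [Module ℝ Y] [TopologicalSpace Y]
    [IsTopologicalAddGroup Y] [ContinuousSMul ℝ Y] [LocallyConvexSpace ℝ Y] [T2Space Y]
    (C : Set Y) (hclosed : IsClosed C) (hconv : Convex ℝ C)
    (hcone : ∀ c ∈ C, ∀ r : ℝ, 0 ≤ r → r • c ∈ C)
    (hint : (interior C).Nonempty) (A B : Set Y)
    (hBcpt : IsCompact B) (hlt : B ⊆ A + interior C) :
    ∃ U ∈ nhds (0 : Y), B + U ⊆ A + C :=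
  stmt_2_general C A B hBcpt hlt
end

section
/- There exist sets A, B ⊆ ℝ² with B ⊆ A + int(C) but for every neighborhood U of 0, (B + U) is not contained in A + C; specifically A = C = ℝ²₊ (the nonnegative orthant) and B = {(x, 1/x) : x > 0}. -/
open Pointwise Set

theorem stmt_3 :
    let C : Set (ℝ × ℝ) := {p | 0 ≤ p.1 ∧ 0 ≤ p.2}
    let A : Set (ℝ × ℝ) := C
    let B : Set (ℝ × ℝ) := {p | ∃ x : ℝ, 0 < x ∧ p = (x, 1 / x)}
    B ⊆ A + interior C ∧ ∀ U ∈ nhds (0 : ℝ × ℝ), ¬ (B + U ⊆ A + C) := by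
  intro C A B
  constructor
  · rintro p ⟨x, hx, rfl⟩
    refine ⟨0, ⟨le_refl 0, le_refl 0⟩, (x, 1/x), ?_, by simp⟩
    have hopen : IsOpen {p : ℝ × ℝ | 0 < p.1 ∧ 0 < p.2} :=
      (isOpen_lt continuous_const continuous_fst).inter
        (isOpen_lt continuous_const continuous_snd)
    have hsub : {p : ℝ × ℝ | 0 < p.1 ∧ 0 < p.2} ⊆ C :=
      fun q hq => ⟨hq.1.le, hq.2.le⟩
    exact interior_maximal hsub hopen ⟨hx, by positivity⟩
  · intro U hU hsub
    obtain ⟨ε, hε, hball⟩ := Metric.mem_nhds_iff.mp hU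
    have hx : (0:ℝ) < 4/ε := by positivity
    have hmem : ((4/ε, ε/4) + (0, -(ε/2)) : ℝ × ℝ) ∈ B + U := by
      refine ⟨(4/ε, ε/4), ⟨4/ε, hx, by rw [one_div, inv_div]⟩, (0, -(ε/2)), hball ?_, rfl⟩
      simp only [Metric.mem_ball, Prod.dist_eq, dist_zero_right, Real.norm_eq_abs,
        Prod.fst_zero, Prod.snd_zero, dist_zero_left] at *
      rw [Prod.norm_def]
      simp only [norm_zero, norm_neg, Real.norm_eq_abs]
      rw [abs_of_nonneg (by linarith : (0:ℝ) ≤ ε/2)]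
      rw [max_lt_iff]
      constructor <;> linarith
    obtain ⟨a, ha, c, hc, heq⟩ := hsub hmem
    have h2 := congrArg Prod.snd heq
    simp only [Prod.snd_add] at h2
    have := ha.2
    have := hc.2
    nlinarith [ha.2, hc.2]
end

section
/- If A + C is convex with nonempty interior of C and for every w* ∈ W* either inf_{a∈A} w*(a) = -∞ or inf_{a∈A} w*(a) < inf_{b∈B} w*(b), then B ⊆ int(A + C). -/
open Pointwise Set Filter Topology

/-- Scalarization of a set `A ⊆ Y` by a weak-star functional: `inf {w(a) : a ∈ A}` in `EReal`
(with `inf ∅ = +∞`). -/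
noncomputable def scal {Y : Type*} [AddCommMonoid Y] [Module ℝ Y] [TopologicalSpace Y]
    (w : WeakDual ℝ Y) (A : Set Y) : EReal :=
  sInf ((fun a => ((w a : ℝ) : EReal)) '' A)

/-!
Suppose `b ∈ B` lies outside `int (A + C)`. The convex set `A + C` has nonempty interior
(it contains `A + int C`), so `b` is weakly separated from it by a nonzero functional `f` with
`f b ≤ f (a + c)` for all `a ∈ A`, `c ∈ C`. Letting `c` run along rays of the cone forces `f ≥ 0`
on `C`, so `f` is a positive multiple of some `w ∈ W*`, and `w b ≤ inf w(A)` contradicts the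
hypothesis. If `A = ∅`, any `w ∈ W*` gives the contradiction, and `W*` is nonempty because the
closed convex cone `C ≠ Y` has a nonzero element in its dual cone.
-/

section Cone

variable {E : Type*} [AddCommGroup E] [Module ℝ E] {C : Set E}

theorem nonneg_of_forall_le_of_smul_mem (hcone : ∀ c ∈ C, ∀ r : ℝ, 0 ≤ r → r • c ∈ C)
    (f : E →ₗ[ℝ] ℝ) {u : ℝ} (hu : ∀ c ∈ C, u ≤ f c) {c : E} (hc : c ∈ C) : 0 ≤ f c := by
  by_contra! hneg
  have hbound := hu _ (hcone c hc ((|u| + 1) / -f c) (div_nonneg (by positivity) (by linarith)))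
  rw [map_smul, smul_eq_mul, div_mul_eq_mul_div, div_neg,
    mul_div_cancel_right₀ _ hneg.ne] at hbound
  linarith [neg_abs_le u]

variable [TopologicalSpace E] [IsTopologicalAddGroup E] [ContinuousSMul ℝ E]

theorem exists_ne_zero_nonneg_of_ne_univ [LocallyConvexSpace ℝ E] (hclosed : IsClosed C)
    (hconv : Convex ℝ C) (hcone : ∀ c ∈ C, ∀ r : ℝ, 0 ≤ r → r • c ∈ C) (h0 : (0 : E) ∈ C)
    (hCne : C ≠ univ) : ∃ f : StrongDual ℝ E, f ≠ 0 ∧ ∀ c ∈ C, 0 ≤ f c := by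
  obtain ⟨x, hx⟩ := (ne_univ_iff_exists_notMem C).1 hCne
  obtain ⟨f, u, hfC, hfx⟩ := geometric_hahn_banach_closed_point hconv hclosed hx
  have hu : 0 < u := by simpa using hfC 0 h0
  refine ⟨-f, fun hf ↦ ?_, fun c hc ↦ ?_⟩
  · have : f x = 0 := by simpa using congr($hf x)
    linarith
  · exact nonneg_of_forall_le_of_smul_mem hcone (-f : StrongDual ℝ E).toLinearMap
      (u := -u) (fun c hc ↦ by simpa using (hfC c hc).le) hc

theorem exists_ne_zero_nonneg_le_of_notMem_interior_add [LocallyConvexSpace ℝ E]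
    (hclosed : IsClosed C) (hconv : Convex ℝ C) (hcone : ∀ c ∈ C, ∀ r : ℝ, 0 ≤ r → r • c ∈ C)
    (hint : (interior C).Nonempty) (hCne : C ≠ univ) {A : Set E} (hAC : Convex ℝ (A + C))
    {b : E} (hb : b ∉ interior (A + C)) :
    ∃ f : StrongDual ℝ E, f ≠ 0 ∧ (∀ c ∈ C, 0 ≤ f c) ∧ ∀ a ∈ A, f b ≤ f a := by
  obtain ⟨e, he⟩ := hint
  have h0 : (0 : E) ∈ C := by simpa using hcone e (interior_subset he) 0 le_rfl
  rcases A.eq_empty_or_nonempty with rfl | ⟨a₀, ha₀⟩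
  · obtain ⟨f, hf0, hfC⟩ := exists_ne_zero_nonneg_of_ne_univ hclosed hconv hcone h0 hCne
    exact ⟨f, hf0, hfC, fun a ha ↦ ha.elim⟩
  have hACint : (interior (A + C)).Nonempty :=
    ⟨a₀ + e, subset_interior_add_right (add_mem_add ha₀ he)⟩
  obtain ⟨g, hg0, hg⟩ := geometric_hahn_banach_of_nonempty_interior_point hAC hb hACint
  have hsep : ∀ a ∈ A, ∀ c ∈ C, g a + g c ≤ g b := fun a ha c hc ↦
    map_add g a c ▸ hg _ (add_mem_add ha hc)
  refine ⟨-g, neg_ne_zero.2 hg0, fun c hc ↦ ?_, fun a ha ↦ ?_⟩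
  · refine nonneg_of_forall_le_of_smul_mem hcone (-g : StrongDual ℝ E).toLinearMap
      (u := g a₀ - g b) (fun c hc ↦ ?_) hc
    simp only [ContinuousLinearMap.coe_coe, neg_apply]
    linarith [hsep a₀ ha₀ c hc]
  · simpa using hsep a ha 0 h0

end Cone

theorem not_scal_eq_bot_or_lt {Y : Type*} [AddCommMonoid Y] [Module ℝ Y] [TopologicalSpace Y]
    {w : WeakDual ℝ Y} {A B : Set Y} {b : Y} (hb : b ∈ B) (hle : ∀ a ∈ A, w b ≤ w a) :
    ¬ (scal w A = ⊥ ∨ scal w A < scal w B) := by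
  have hA : ((w b : ℝ) : EReal) ≤ scal w A :=
    le_sInf (by rintro _ ⟨a, ha, rfl⟩; exact EReal.coe_le_coe_iff.2 (hle a ha))
  have hB : scal w B ≤ ((w b : ℝ) : EReal) := sInf_le ⟨b, hb, rfl⟩
  rintro (hbot | hlt)
  · exact (EReal.bot_lt_coe _).not_ge (hbot ▸ hA)
  · exact (hlt.trans_le (hB.trans hA)).false

theorem stmt_5_general {Y : Type*} [AddCommGroup Y] [Module ℝ Y] [TopologicalSpace Y]
    [IsTopologicalAddGroup Y] [ContinuousSMul ℝ Y] [LocallyConvexSpace ℝ Y]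
    (C : Set Y) (hclosed : IsClosed C) (hconv : Convex ℝ C)
    (hcone : ∀ c ∈ C, ∀ r : ℝ, 0 ≤ r → r • c ∈ C)
    (hint : (interior C).Nonempty) (hCne : C ≠ Set.univ)
    (Wstar : Set (WeakDual ℝ Y))
    (hWbase : ∀ w : WeakDual ℝ Y, (∀ c ∈ C, 0 ≤ w c) → w ≠ 0 →
      ∃ t : ℝ, 0 < t ∧ ∃ w' ∈ Wstar, w = t • w')
    (A B : Set Y) (hAC : Convex ℝ (A + C))
    (h : ∀ w ∈ Wstar, scal w A = ⊥ ∨ scal w A < scal w B) :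
    B ⊆ interior (A + C) := by
  intro b hb
  by_contra hbA
  obtain ⟨f, hf0, hfC, hfA⟩ :=
    exists_ne_zero_nonneg_le_of_notMem_interior_add hclosed hconv hcone hint hCne hAC hbA
  obtain ⟨t, ht, w, hw, rfl⟩ := hWbase f hfC hf0
  exact not_scal_eq_bot_or_lt hb (fun a ha ↦ le_of_mul_le_mul_left (hfA a ha) ht) (h w hw)

theorem stmt_5 {Y : Type*} [AddCommGroup Y] [Module ℝ Y] [TopologicalSpace Y]
    [IsTopologicalAddGroup Y] [ContinuousSMul ℝ Y] [LocallyConvexSpace ℝ Y] [T2Space Y]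
    (C : Set Y) (hclosed : IsClosed C) (hconv : Convex ℝ C)
    (hcone : ∀ c ∈ C, ∀ r : ℝ, 0 ≤ r → r • c ∈ C)
    (hint : (interior C).Nonempty) (hCne : C ≠ Set.univ)
    (Wstar : Set (WeakDual ℝ Y)) (hWcpt : IsCompact Wstar)
    (hWsub : ∀ w ∈ Wstar, ∀ c ∈ C, 0 ≤ w c) (hW0 : (0 : WeakDual ℝ Y) ∉ Wstar)
    (hWbase : ∀ w : WeakDual ℝ Y, (∀ c ∈ C, 0 ≤ w c) → w ≠ 0 →
      ∃ t : ℝ, 0 < t ∧ ∃ w' ∈ Wstar, w = t • w')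
    (A B : Set Y) (hAC : Convex ℝ (A + C))
    (h : ∀ w ∈ Wstar, scal w A = ⊥ ∨ scal w A < scal w B) :
    B ⊆ interior (A + C) :=
  stmt_5_general C hclosed hconv hcone hint hCne Wstar hWbase A B hAC h
end

section
/- (Diewert's mean value theorem) Let φ: [0,1] → ℝ be lower semicontinuous and real-valued. Then there exists t ∈ [0,1) such that φ(1) − φ(0) ≤ φ↓(t, 1), where φ↓(t, d) = liminf_{s↓0} (φ(t + s d) − φ(t))/s is the lower Dini directional derivative. -/
open Set Filter Topology

/-- Lower Dini directional derivative of a real-valued function on `ℝ`: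
`liminf_{s → 0+} (φ (t + s d) - φ t) / s`, valued in `EReal`. -/
noncomputable def dini (φ : ℝ → ℝ) (t d : ℝ) : EReal :=
  Filter.liminf (fun s : ℝ => (((φ (t + s * d) - φ t) / s : ℝ) : EReal))
    (nhdsWithin 0 (Set.Ioi 0))

/-! Subtracting the secant line `x ↦ (φ 1 - φ 0) x` makes the endpoint values equal, so the
lower semicontinuous function `φ x - (φ 1 - φ 0) x` attains its minimum on `[0,1]` at some
`t < 1`. Every difference quotient of `φ` to the right of such a `t` is then at least
`φ 1 - φ 0`, and so is their liminf. -/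

theorem coe_le_dini_of_eventually {φ : ℝ → ℝ} {t d c : ℝ}
    (h : ∀ᶠ s in 𝓝[>] 0, c * s ≤ φ (t + s * d) - φ t) : (c : EReal) ≤ dini φ t d := by
  refine le_liminf_of_le (by isBoundedDefault) ?_
  filter_upwards [h, self_mem_nhdsWithin] with s hs (hs0 : 0 < s)
  exact EReal.coe_le_coe_iff.2 ((le_div_iff₀ hs0).2 hs)

theorem coe_le_dini_of_isMinOn {φ : ℝ → ℝ} {t b c : ℝ} (htb : t < b)
    (hmin : IsMinOn (fun x => φ x - c * x) (Icc t b) t) : (c : EReal) ≤ dini φ t 1 := by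
  refine coe_le_dini_of_eventually ?_
  filter_upwards [Ioo_mem_nhdsGT (sub_pos.2 htb)] with s hs
  have := isMinOn_iff.1 hmin (t + s * 1) ⟨by linarith [hs.1], by linarith [hs.2]⟩
  linarith

theorem LowerSemicontinuousOn.exists_mem_Ico_isMinOn {f : ℝ → ℝ} {a b : ℝ} (hab : a < b)
    (hf : LowerSemicontinuousOn f (Icc a b)) (hfab : f a = f b) :
    ∃ t ∈ Ico a b, IsMinOn f (Icc a b) t := by
  obtain ⟨x, hx, hmin⟩ := hf.exists_isMinOn (nonempty_Icc.2 hab.le) isCompact_Icc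
  rcases hx.2.lt_or_eq with hxb | rfl
  · exact ⟨x, ⟨hx.1, hxb⟩, hmin⟩
  · refine ⟨a, left_mem_Ico.2 hab, isMinOn_iff.2 fun y hy => ?_⟩
    exact hfab ▸ isMinOn_iff.1 hmin y hy

theorem stmt_10 (φ : ℝ → ℝ) (hlsc : LowerSemicontinuousOn φ (Set.Icc (0 : ℝ) 1)) :
    ∃ t ∈ Set.Ico (0 : ℝ) 1, ((φ 1 - φ 0 : ℝ) : EReal) ≤ dini φ t 1 := by
  set c := φ 1 - φ 0
  have hψ : LowerSemicontinuousOn (fun x => φ x - c * x) (Icc 0 1) :=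
    hlsc.add ((continuous_const_mul c).neg.lowerSemicontinuous.lowerSemicontinuousOn _)
  obtain ⟨t, ht, hmin⟩ := hψ.exists_mem_Ico_isMinOn zero_lt_one (by simp [c])
  exact ⟨t, ht, coe_le_dini_of_isMinOn ht.2 (hmin.on_subset (Icc_subset_Icc_left ht.1))⟩
end

section
/- If φ: ℝ → ℝ ∪ {±∞} is lower semicontinuous on [0,1], dom φ = [0,1], and (lower Dini) pseudoconvex, then φ restricted to [0,1] is semistrictly quasiconvex. -/
open Set Filter Topology

/-- Lower Dini directional derivative of an `EReal`-valued function on `ℝ`: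
`liminf_{t → 0+} (φ (x + t d) - φ x) * (1/t)`, valued in `EReal`. -/
noncomputable def diniE (φ : ℝ → EReal) (x d : ℝ) : EReal :=
  Filter.liminf (fun t : ℝ => (φ (x + t * d) - φ x) * (((1 : ℝ) / t : ℝ) : EReal))
    (nhdsWithin 0 (Set.Ioi 0))

/-- `φ` is semistrictly quasiconvex: for `a, b` in the effective domain with `φ a ≠ φ b`,
`φ (a + t (b - a)) < max (φ a) (φ b)` for `t ∈ (0,1)`. -/
def SSQC (φ : ℝ → EReal) : Prop :=
  ∀ a b : ℝ, φ a ≠ ⊤ → φ b ≠ ⊤ → ∀ t : ℝ, t ∈ Set.Ioo (0 : ℝ) 1 →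
    φ a ≠ φ b → φ (a + t * (b - a)) < max (φ a) (φ b)

theorem descent (φ : ℝ → EReal) {x d : ℝ} (h : diniE φ x d < 0)
    (hb : φ x ≠ ⊥) (ht : φ x ≠ ⊤) {ε : ℝ} (hε : 0 < ε) :
    ∃ t : ℝ, 0 < t ∧ t < ε ∧ φ (x + t * d) < φ x := by
  have hfreq := frequently_lt_of_liminf_lt (by isBoundedDefault) h
  rw [Filter.frequently_iff] at hfreq
  obtain ⟨t, htm, hlt⟩ := hfreq (Ioo_mem_nhdsGT hε)
  refine ⟨t, htm.1, htm.2, ?_⟩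
  have hpos : (0 : EReal) < (((1:ℝ)/t : ℝ) : EReal) := by
    exact_mod_cast one_div_pos.mpr htm.1
  have hdiff : φ (x + t * d) - φ x < 0 := by
    by_contra hge
    push_neg at hge
    exact absurd (mul_nonneg hge hpos.le) (not_le.mpr hlt)
  lift φ x to ℝ using ⟨ht, hb⟩ with r hr
  obtain ⟨q, hq⟩ : ∃ q, φ (x + t * d) = q := ⟨_, rfl⟩
  rw [hq] at hdiff ⊢
  induction q with
  | bot => exact bot_lt_iff_ne_bot.mpr (EReal.coe_ne_bot r)
  | coe p =>
    rw [← EReal.coe_sub] at hdiff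
    exact_mod_cast sub_neg.mp (by exact_mod_cast hdiff)
  | top => rw [EReal.top_sub_coe] at hdiff; exact absurd hdiff (by simp)


theorem exists_min' (f : ℝ → EReal) {S K : Set ℝ}
    (hf : ∀ s ∈ S, ∀ y : EReal, y < f s → ∀ᶠ r in 𝓝[S] s, y < f r)
    (hK : IsCompact K) (hKS : K ⊆ S) (hne : K.Nonempty) :
    ∃ c ∈ K, ∀ s ∈ K, f c ≤ f s := by
  by_contra hcon
  push_neg at hcon
  have key : ∀ r : K, ∃ (s : ℝ) (U : Set ℝ), s ∈ K ∧ IsOpen U ∧ (r : ℝ) ∈ U ∧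
      ∀ x ∈ U ∩ S, f s < f x := by
    rintro ⟨r, hr⟩
    obtain ⟨s, hsK, hs⟩ := hcon r hr
    have hev := hf r (hKS hr) (f s) hs
    rw [eventually_nhdsWithin_iff] at hev
    obtain ⟨U, hUsub, hUopen, hrU⟩ := eventually_nhds_iff.mp hev
    exact ⟨s, U, hsK, hUopen, hrU, fun x hx => hUsub x hx.1 hx.2⟩
  choose s U hsK hUopen hrU hUlt using key
  obtain ⟨t, htcov⟩ := hK.elim_finite_subcover U hUopen
    (fun r hr => mem_iUnion.mpr ⟨⟨r, hr⟩, hrU ⟨r, hr⟩⟩)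
  have htne : t.Nonempty := by
    obtain ⟨k, hk⟩ := hne
    obtain ⟨i, hi, _⟩ := mem_iUnion₂.mp (htcov hk)
    exact ⟨i, hi⟩
  obtain ⟨i, hit, himin⟩ := t.exists_min_image (fun r => f (s r)) htne
  obtain ⟨j, hjt, hj⟩ := mem_iUnion₂.mp (htcov (hsK i))
  exact absurd (hUlt j (s i) ⟨hj, hKS (hsK i)⟩) (not_lt.mpr (himin j hjt))

theorem main_seg (ψ : ℝ → EReal)
    (lscψ : ∀ s ∈ Icc (0:ℝ) 1, ∀ y : EReal, y < ψ s → ∀ᶠ r in 𝓝[Icc (0:ℝ) 1] s, y < ψ r)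
    (hψtop : ∀ s ∈ Icc (0:ℝ) 1, ψ s ≠ ⊤)
    (dsc : ∀ s s' : ℝ, ψ s' < ψ s → ψ s ≠ ⊥ → ψ s ≠ ⊤ → ∀ ε : ℝ, 0 < ε →
      ∃ t : ℝ, 0 < t ∧ t < ε ∧ ψ (s + t * (s' - s)) < ψ s)
    (hab : ψ 0 < ψ 1) {t₀ : ℝ} (ht₀ : t₀ ∈ Ioo (0:ℝ) 1) : ψ t₀ < ψ 1 := by
  by_contra hcon
  push_neg at hcon
  obtain ⟨ht₀0, ht₀1⟩ := ht₀
  have h1mem : (1:ℝ) ∈ Icc (0:ℝ) 1 := by constructor <;> norm_num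
  obtain ⟨l, hl0, hl1⟩ := EReal.exists_between_coe_real hab
  have hlt₀ : (l : EReal) < ψ t₀ := hl1.trans_le hcon
  set C : Set ℝ := {s : ℝ | s ∈ Icc 0 t₀ ∧ ψ s ≤ (l : EReal)} with hCdef
  have hC0 : (0:ℝ) ∈ C := ⟨⟨le_refl 0, ht₀0.le⟩, hl0.le⟩
  have hCbdd : BddAbove C := ⟨t₀, fun s hs => hs.1.2⟩
  set α := sSup C with hαdef
  have hα0 : 0 ≤ α := le_csSup hCbdd hC0
  have hαt₀ : α ≤ t₀ := csSup_le ⟨0, hC0⟩ (fun s hs => hs.1.2)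
  have hα01 : α ∈ Icc (0:ℝ) 1 := ⟨hα0, hαt₀.trans ht₀1.le⟩
  have hψα : ψ α ≤ (l : EReal) := by
    by_contra hgt
    push_neg at hgt
    have hev := lscψ α hα01 l hgt
    rw [eventually_nhdsWithin_iff, Metric.eventually_nhds_iff] at hev
    obtain ⟨δ, hδ, hball⟩ := hev
    obtain ⟨s, hsC, hs⟩ := exists_lt_of_lt_csSup ⟨0, hC0⟩ (show α - δ < sSup C by rw [← hαdef]; linarith)
    have hsle : s ≤ α := le_csSup hCbdd hsC
    have hd : dist s α < δ := by rw [Real.dist_eq, abs_lt]; constructor <;> linarith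
    exact absurd hsC.2 (not_le.mpr (hball hd ⟨hsC.1.1, hsC.1.2.trans ht₀1.le⟩))
  have hαlt : α < t₀ := lt_of_le_of_ne hαt₀ (fun he => absurd (he ▸ hψα) (not_le.mpr hlt₀))
  have hgt1 : ∀ s : ℝ, α < s → s ≤ t₀ → (l : EReal) < ψ s := by
    intro s h1 h2
    by_contra hle
    push_neg at hle
    exact absurd (le_csSup hCbdd ⟨⟨hα0.trans h1.le, h2⟩, hle⟩) (not_le.mpr h1)
  set S2 : Set ℝ := {s : ℝ | s ∈ Icc t₀ 1 ∧ ψ s ≤ (l : EReal)} with hS2def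
  by_cases hS2 : S2.Nonempty
  · -- two-sided case
    have hβbdd : BddBelow S2 := ⟨t₀, fun s hs => hs.1.1⟩
    set β := sInf S2 with hβdef
    have hβt₀ : t₀ ≤ β := le_csInf hS2 (fun s hs => hs.1.1)
    have hβ1 : β ≤ 1 := by
      obtain ⟨s, hs⟩ := hS2
      exact (csInf_le hβbdd hs).trans hs.1.2
    have hβ01 : β ∈ Icc (0:ℝ) 1 := ⟨ht₀0.le.trans hβt₀, hβ1⟩
    have hψβ : ψ β ≤ (l : EReal) := by
      by_contra hgt
      push_neg at hgt
      have hev := lscψ β hβ01 l hgt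
      rw [eventually_nhdsWithin_iff, Metric.eventually_nhds_iff] at hev
      obtain ⟨δ, hδ, hball⟩ := hev
      obtain ⟨s, hsS, hs⟩ := exists_lt_of_csInf_lt hS2 (show sInf S2 < β + δ by rw [← hβdef]; linarith)
      have hsge : β ≤ s := csInf_le hβbdd hsS
      have hd : dist s β < δ := by rw [Real.dist_eq, abs_lt]; constructor <;> linarith
      exact absurd hsS.2 (not_le.mpr (hball hd ⟨ht₀0.le.trans hsS.1.1, hsS.1.2⟩))
    have hβgt : t₀ < β := lt_of_le_of_ne hβt₀ (fun he => absurd (he ▸ hψβ) (not_le.mpr hlt₀))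
    have hgt2 : ∀ s : ℝ, t₀ ≤ s → s < β → (l : EReal) < ψ s := by
      intro s h1 h2
      by_contra hle
      push_neg at hle
      exact absurd (csInf_le hβbdd ⟨⟨h1, h2.le.trans hβ1⟩, hle⟩) (not_le.mpr h2)
    set u := (α + t₀) / 2 with hu
    set v := (t₀ + β) / 2 with hv
    have hαu : α < u := by rw [hu]; linarith
    have hut₀ : u < t₀ := by rw [hu]; linarith
    have ht₀v : t₀ < v := by rw [hv]; linarith
    have hvβ : v < β := by rw [hv]; linarith
    have hu0 : (0:ℝ) ≤ u := by rw [hu]; linarith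
    have hv1 : v ≤ 1 := by linarith
    have hKsub : Icc u v ⊆ Icc (0:ℝ) 1 := fun s hs => ⟨hu0.trans hs.1, hs.2.trans hv1⟩
    obtain ⟨c, hcK, hcmin⟩ := exists_min' ψ lscψ isCompact_Icc hKsub
      (nonempty_Icc.mpr (by linarith))
    have hlc : (l : EReal) < ψ c := by
      rcases le_or_gt c t₀ with h | h
      · exact hgt1 c (hαu.trans_le hcK.1) h
      · exact hgt2 c h.le (hcK.2.trans_lt hvβ)
    have hcbot : ψ c ≠ ⊥ := fun he => by rw [he] at hlc; exact absurd hlc (by simp)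
    have hctop : ψ c ≠ ⊤ := hψtop c (hKsub hcK)
    have hcu : c = u := by
      by_contra hne
      have hcu' : u < c := lt_of_le_of_ne hcK.1 (Ne.symm hne)
      have hcα : α < c := hαu.trans hcu'
      have hε : 0 < (c - u) / (c - α) := div_pos (by linarith) (by linarith)
      obtain ⟨t, ht0, htε, hlt⟩ := dsc c α (hψα.trans_lt hlc) hcbot hctop _ hε
      have hmul : t * (c - α) < c - u := (lt_div_iff₀ (by linarith)).mp htε
      have hkey : t * (α - c) = -(t * (c - α)) := by ring
      have hnp : t * (α - c) ≤ 0 := by nlinarith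
      have hpm : c + t * (α - c) ∈ Icc u v :=
        ⟨by linarith, by linarith [hcK.2]⟩
      exact absurd (hcmin _ hpm) (not_le.mpr hlt)
    have hε2 : 0 < (v - u) / (β - u) := div_pos (by linarith) (by linarith)
    obtain ⟨t, ht0, htε, hlt⟩ := dsc c β (hψβ.trans_lt hlc) hcbot hctop _ hε2
    have hmul : t * (β - u) < v - u := (lt_div_iff₀ (by linarith)).mp htε
    have hnn : 0 ≤ t * (β - c) := by rw [hcu]; nlinarith
    have hpm : c + t * (β - c) ∈ Icc u v := by
      rw [hcu] at *
      exact ⟨by linarith, by linarith⟩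
    exact absurd (hcmin _ hpm) (not_le.mpr hlt)
  · -- right set empty
    have hgt3 : ∀ s ∈ Icc t₀ 1, (l : EReal) < ψ s := fun s hs =>
      not_le.mp (fun hle => hS2 ⟨s, hs, hle⟩)
    have hKsub : Icc t₀ 1 ⊆ Icc (0:ℝ) 1 := fun s hs => ⟨ht₀0.le.trans hs.1, hs.2⟩
    obtain ⟨w, hwK, hwmin⟩ := exists_min' ψ lscψ isCompact_Icc hKsub
      (nonempty_Icc.mpr ht₀1.le)
    have hlw : (l : EReal) < ψ w := hgt3 w hwK
    have hwbot : ψ w ≠ ⊥ := fun he => by rw [he] at hlw; exact absurd hlw (by simp)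
    have hwtop : ψ w ≠ ⊤ := hψtop w (hKsub hwK)
    have hwt : w = t₀ := by
      by_contra hne
      have ht₀w : t₀ < w := lt_of_le_of_ne hwK.1 (Ne.symm hne)
      have hαw : α < w := hαlt.trans ht₀w
      have hε : 0 < (w - t₀) / (w - α) := div_pos (by linarith) (by linarith)
      obtain ⟨t, ht0, htε, hlt⟩ := dsc w α (hψα.trans_lt hlw) hwbot hwtop _ hε
      have hmul : t * (w - α) < w - t₀ := (lt_div_iff₀ (by linarith)).mp htε
      have hkey : t * (α - w) = -(t * (w - α)) := by ring
      have hnp : t * (α - w) ≤ 0 := by nlinarith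
      have hpm : w + t * (α - w) ∈ Icc t₀ 1 := ⟨by linarith, by linarith [hwK.2]⟩
      exact absurd (hwmin _ hpm) (not_le.mpr hlt)
    have h1bot : ψ 1 ≠ ⊥ := fun he => by rw [he] at hl1; exact absurd hl1 (by simp)
    have h1top : ψ 1 ≠ ⊤ := hψtop 1 h1mem
    obtain ⟨t, ht0, htε, hlt⟩ := dsc 1 0 hab h1bot h1top (1 - t₀) (by linarith)
    have hpm : 1 + t * (0 - 1) ∈ Icc t₀ 1 := ⟨by linarith, by linarith⟩
    have hmin := hwmin _ hpm
    rw [hwt] at hmin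
    exact absurd (lt_of_le_of_lt hmin hlt) (not_lt.mpr hcon)

theorem key_lemma (φ : ℝ → EReal) (hlsc : LowerSemicontinuousOn φ (Set.Icc (0 : ℝ) 1))
    (hdom : ∀ x : ℝ, φ x ≠ ⊤ ↔ x ∈ Set.Icc (0 : ℝ) 1)
    (hpc : ∀ a b : ℝ, φ a < φ b → diniE φ b (a - b) < 0)
    {a b : ℝ} (hab : φ a < φ b) (hbtop : φ b ≠ ⊤) {t₀ : ℝ} (ht₀ : t₀ ∈ Set.Ioo (0:ℝ) 1) :
    φ (a + t₀ * (b - a)) < φ b := by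
  have hatop : φ a ≠ ⊤ := fun he => absurd (he ▸ hab) (by simp)
  have ha' : a ∈ Icc (0:ℝ) 1 := (hdom a).mp hatop
  have hb' : b ∈ Icc (0:ℝ) 1 := (hdom b).mp hbtop
  set ψ : ℝ → EReal := fun s => φ (a + s * (b - a)) with hψdef
  have hxmem : ∀ s ∈ Icc (0:ℝ) 1, a + s * (b - a) ∈ Icc (0:ℝ) 1 := by
    intro s hs
    constructor
    · nlinarith [ha'.1, ha'.2, hb'.1, hb'.2, hs.1, hs.2]
    · nlinarith [ha'.1, ha'.2, hb'.1, hb'.2, hs.1, hs.2]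
  have hψtop : ∀ s ∈ Icc (0:ℝ) 1, ψ s ≠ ⊤ := fun s hs => (hdom _).mpr (hxmem s hs)
  have lscψ : ∀ s ∈ Icc (0:ℝ) 1, ∀ y : EReal, y < ψ s → ∀ᶠ r in 𝓝[Icc (0:ℝ) 1] s, y < ψ r := by
    intro s hs y hy
    have hcont : ContinuousWithinAt (fun r : ℝ => a + r * (b - a)) (Icc 0 1) s :=
      (Continuous.continuousWithinAt (by continuity))
    have htend := hcont.tendsto_nhdsWithin hxmem
    exact htend.eventually (hlsc _ (hxmem s hs) y hy)
  have dsc : ∀ s s' : ℝ, ψ s' < ψ s → ψ s ≠ ⊥ → ψ s ≠ ⊤ → ∀ ε : ℝ, 0 < ε →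
      ∃ t : ℝ, 0 < t ∧ t < ε ∧ ψ (s + t * (s' - s)) < ψ s := by
    intro s s' hlt hsb hst ε hε
    have hd := hpc (a + s' * (b - a)) (a + s * (b - a)) hlt
    obtain ⟨t, ht0, htε, hφ⟩ := descent φ hd hsb hst hε
    refine ⟨t, ht0, htε, ?_⟩
    have heq : a + (s + t * (s' - s)) * (b - a)
        = (a + s * (b - a)) + t * ((a + s' * (b - a)) - (a + s * (b - a))) := by ring
    show φ (a + (s + t * (s' - s)) * (b - a)) < φ (a + s * (b - a))
    rw [heq]
    exact hφ
  have hab' : ψ 0 < ψ 1 := by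
    show φ (a + 0 * (b - a)) < φ (a + 1 * (b - a))
    rw [show a + 0 * (b - a) = a by ring, show a + 1 * (b - a) = b by ring]
    exact hab
  have := main_seg ψ lscψ hψtop dsc hab' ht₀
  have h2 : φ (a + t₀ * (b - a)) < φ (a + 1 * (b - a)) := this
  rw [show a + 1 * (b - a) = b by ring] at h2
  exact h2

theorem stmt_12 (φ : ℝ → EReal) (hlsc : LowerSemicontinuousOn φ (Set.Icc (0 : ℝ) 1))
    (hdom : ∀ x : ℝ, φ x ≠ ⊤ ↔ x ∈ Set.Icc (0 : ℝ) 1)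
    (hpc : ∀ a b : ℝ, φ a < φ b → diniE φ b (a - b) < 0) :
    SSQC φ := by
  intro a b ha hb t ht hne
  rcases hne.lt_or_gt with h | h
  · rw [max_eq_right h.le]
    exact key_lemma φ hlsc hdom hpc h hb ht
  · rw [max_eq_left h.le]
    rw [show a + t * (b - a) = b + (1 - t) * (a - b) by ring]
    exact key_lemma φ hlsc hdom hpc h ha ⟨by linarith [ht.2], by linarith [ht.1]⟩
end

section
/- Let F: X → P(Y) be C-convex and x₀ ∈ dom F a scalarized weak minimizer with F(x₀) + C ≠ Y. Then for all x ∈ X there exists w* ∈ W* such that φ_{F,w*}(x) ≠ −∞ and (φ_{F,w*})↓(x, x₀ − x) ≤ 0. -/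
/-!
Scalarizing by a functional `w` that is nonnegative on `C` turns `C`-convexity of `F` into
quasiconvexity of `φ = scal w ∘ F`. If `φ x₀ ≤ φ x`, then `φ` does not exceed `φ x` on the segment
from `x` to `x₀`, so every difference quotient in direction `x₀ - x` is nonpositive. Quasiconvexity
suffices here and, unlike convexity, needs no `⊤ - ⊤` arithmetic in `EReal`.
-/

open Pointwise Set Filter Topology

/-- `F` is `C`-convex. -/
def CConvex {X Y : Type*} [AddCommGroup X] [Module ℝ X] [AddCommGroup Y] [Module ℝ Y]
    (F : X → Set Y) (C : Set Y) : Prop :=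
  ∀ x₁ x₂ : X, ∀ t : ℝ, t ∈ Set.Icc (0 : ℝ) 1 →
    t • F x₁ + (1 - t) • F x₂ ⊆ F (t • x₁ + (1 - t) • x₂) + C

/-- Lower Dini directional derivative of `φ : X → EReal` at `x` in direction `d`:
`liminf_{t → 0+} (φ (x + t • d) - φ x) * (1/t)`. -/
noncomputable def diniX {X : Type*} [AddCommGroup X] [Module ℝ X]
    (φ : X → EReal) (x d : X) : EReal :=
  Filter.liminf (fun t : ℝ => (φ (x + t • d) - φ x) * (((1 : ℝ) / t : ℝ) : EReal))
    (nhdsWithin 0 (Set.Ioi 0))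

section Scalarization

variable {Y : Type*} [AddCommMonoid Y] [Module ℝ Y] [TopologicalSpace Y]

lemma scal_le_of_mem {w : WeakDual ℝ Y} {A : Set Y} {a : Y} (ha : a ∈ A) :
    scal w A ≤ (w a : EReal) :=
  sInf_le (mem_image_of_mem _ ha)

lemma exists_mem_lt_of_scal_lt {w : WeakDual ℝ Y} {A : Set Y} {c : EReal} (h : scal w A < c) :
    ∃ a ∈ A, (w a : EReal) < c := by
  simpa only [scal, sInf_lt_iff, exists_mem_image] using h

end Scalarization

lemma CConvex.quasiconvexOn_scal {X Y : Type*} [AddCommGroup X] [Module ℝ X] [AddCommGroup Y]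
    [Module ℝ Y] [TopologicalSpace Y] {F : X → Set Y} {C : Set Y} (hF : CConvex F C)
    {w : WeakDual ℝ Y} (hw : ∀ c ∈ C, 0 ≤ w c) :
    QuasiconvexOn ℝ univ (fun x => scal w (F x)) := by
  refine quasiconvexOn_iff_le_max.2 ⟨convex_univ, fun x₁ _ x₂ _ t s ht hs hts => ?_⟩
  obtain rfl : s = 1 - t := by linarith
  refine le_of_forall_gt fun c hc => ?_
  obtain ⟨a, ha, hac⟩ := exists_mem_lt_of_scal_lt (lt_of_le_of_lt (le_max_left _ _) hc)
  obtain ⟨b, hb, hbc⟩ := exists_mem_lt_of_scal_lt (lt_of_le_of_lt (le_max_right _ _) hc)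
  obtain ⟨y, hy, d, hd, hyd : y + d = _⟩ := hF x₁ x₂ t ⟨ht, by linarith⟩ <|
    add_mem_add (smul_mem_smul_set ha) (smul_mem_smul_set hb)
  have hwy : w y ≤ max (w a) (w b) := calc
    w y ≤ w y + w d := le_add_of_nonneg_right (hw d hd)
    _ = t • w a + (1 - t) • w b := by rw [← map_add, hyd, map_add, map_smul, map_smul]
    _ ≤ max (w a) (w b) := Convex.combo_le_max _ _ ht hs (add_sub_cancel t 1)
  calc scal w (F (t • x₁ + (1 - t) • x₂)) ≤ (w y : EReal) := scal_le_of_mem hy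
    _ ≤ ((max (w a) (w b) : ℝ) : EReal) := EReal.coe_le_coe hwy
    _ = max (w a : EReal) (w b) := EReal.coe_strictMono.monotone.map_max
    _ < c := max_lt hac hbc

lemma diniX_nonpos_of_eventually_le {X : Type*} [AddCommGroup X] [Module ℝ X] {φ : X → EReal}
    {x d : X} (h : ∀ᶠ t in 𝓝[>] (0 : ℝ), φ (x + t • d) ≤ φ x) : diniX φ x d ≤ 0 := by
  have hquot : ∀ᶠ t in 𝓝[>] (0 : ℝ), (φ (x + t • d) - φ x) * ((1 / t : ℝ) : EReal) ≤ 0 := by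
    filter_upwards [h, self_mem_nhdsWithin] with t hle ht
    exact mul_nonpos_of_nonpos_of_nonneg (EReal.sub_nonpos.2 hle)
      (EReal.coe_nonneg.2 (one_div_nonneg.2 (le_of_lt ht)))
  exact liminf_le_of_frequently_le' hquot.frequently

lemma QuasiconvexOn.diniX_nonpos {X : Type*} [AddCommGroup X] [Module ℝ X] {φ : X → EReal}
    (hφ : QuasiconvexOn ℝ univ φ) {x₀ x : X} (hx₀ : φ x₀ ≤ φ x) : diniX φ x (x₀ - x) ≤ 0 := by
  refine diniX_nonpos_of_eventually_le ?_
  filter_upwards [Ioo_mem_nhdsGT one_pos] with t ⟨ht0, ht1⟩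
  have hseg : x + t • (x₀ - x) = t • x₀ + (1 - t) • x := by module
  calc φ (x + t • (x₀ - x)) ≤ max (φ x₀) (φ x) := by
        rw [hseg]
        exact (quasiconvexOn_iff_le_max.1 hφ).2 (mem_univ _) (mem_univ _) ht0.le (by linarith)
          (add_sub_cancel t 1)
    _ = φ x := max_eq_right hx₀

theorem stmt_14_general {X Y : Type*} [AddCommGroup X] [Module ℝ X]
    [AddCommGroup Y] [Module ℝ Y] [TopologicalSpace Y]
    (C : Set Y)
    (Wstar : Set (WeakDual ℝ Y))
    (hWsub : ∀ w ∈ Wstar, ∀ c ∈ C, 0 ≤ w c)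
    (F : X → Set Y) (hF : CConvex F C) (x₀ : X)
    (hmin : ∀ x : X, ∃ w ∈ Wstar, scal w (F x₀) ≤ scal w (F x) ∧ scal w (F x) ≠ ⊥) :
    ∀ x : X, ∃ w ∈ Wstar, scal w (F x) ≠ ⊥ ∧
      diniX (fun z => scal w (F z)) x (x₀ - x) ≤ 0 := by
  intro x
  obtain ⟨w, hw, hx₀, hx⟩ := hmin x
  exact ⟨w, hw, hx, (hF.quasiconvexOn_scal (hWsub w hw)).diniX_nonpos hx₀⟩

theorem stmt_14 {X Y : Type*} [AddCommGroup X] [Module ℝ X]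
    [AddCommGroup Y] [Module ℝ Y] [TopologicalSpace Y]
    [IsTopologicalAddGroup Y] [ContinuousSMul ℝ Y] [LocallyConvexSpace ℝ Y] [T2Space Y]
    (C : Set Y) (hclosed : IsClosed C) (hconv : Convex ℝ C)
    (hcone : ∀ c ∈ C, ∀ r : ℝ, 0 ≤ r → r • c ∈ C)
    (hint : (interior C).Nonempty) (hCne : C ≠ Set.univ)
    (Wstar : Set (WeakDual ℝ Y)) (hWcpt : IsCompact Wstar)
    (hWsub : ∀ w ∈ Wstar, ∀ c ∈ C, 0 ≤ w c) (hW0 : (0 : WeakDual ℝ Y) ∉ Wstar)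
    (hWbase : ∀ w : WeakDual ℝ Y, (∀ c ∈ C, 0 ≤ w c) → w ≠ 0 →
      ∃ t : ℝ, 0 < t ∧ ∃ w' ∈ Wstar, w = t • w')
    (F : X → Set Y) (hF : CConvex F C) (x₀ : X) (hx₀ : (F x₀).Nonempty)
    (hne : F x₀ + C ≠ Set.univ)
    (hmin : ∀ x : X, ∃ w ∈ Wstar, scal w (F x₀) ≤ scal w (F x) ∧ scal w (F x) ≠ ⊥) :
    ∀ x : X, ∃ w ∈ Wstar, scal w (F x) ≠ ⊥ ∧
      diniX (fun z => scal w (F z)) x (x₀ - x) ≤ 0 :=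
  stmt_14_general C Wstar hWsub F hF x₀ hmin
end

section
/- If F: X → P(Y) is upper Hausdorff continuous at x₀ ∈ dom F, then the family of scalarizations {φ_{F,w*} : w* ∈ W*} is lower equicontinuous at x₀: for all ε > 0 there exists a 0-neighborhood V in X such that φ_{F,w*}(x₀) ≤ φ_{F,w*}(x) + ε for all x ∈ x₀ + V and all w* ∈ W*. -/
open Pointwise Set Filter Topology

/-! The functionals of `W` are nonnegative on `C ∋ e + u` for `u` near `0`, where `e ∈ interior C`,
so `w u ≥ -w e`, and `w e` is bounded on the compact set `W`. Rescaling that neighborhood makes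
the uniform lower bound as small as we like; upper Hausdorff continuity then moves every point
of `F x` by at most such a perturbation away from `F x₀`. -/

theorem scal_le_scal_add_of_subset_add {Y : Type*} [AddCommGroup Y] [Module ℝ Y]
    [TopologicalSpace Y] (w : WeakDual ℝ Y) {A B U : Set Y} {ε : ℝ} (hBA : B ⊆ A + U)
    (hU : ∀ u ∈ U, -ε ≤ w u) :
    scal w A ≤ scal w B + (ε : EReal) := by
  refine (EReal.sub_le_iff_le_add (.inl (EReal.coe_ne_bot ε)) (.inl (EReal.coe_ne_top ε))).1 ?_
  refine le_sInf ?_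
  rintro _ ⟨y, hy, rfl⟩
  obtain ⟨a, ha, u, hu, rfl⟩ := hBA hy
  have hscal : scal w A ≤ (w a : EReal) := sInf_le ⟨a, ha, rfl⟩
  have hwa : w a - ε ≤ w (a + u) := by
    rw [map_add]
    linarith [hU u hu]
  calc scal w A - ε ≤ (w a : EReal) - ε := EReal.sub_le_sub hscal le_rfl
    _ = ((w a - ε : ℝ) : EReal) := (EReal.coe_sub _ _).symm
    _ ≤ (w (a + u) : EReal) := EReal.coe_le_coe_iff.2 hwa

theorem exists_mem_nhds_zero_forall_neg_le_apply {Y : Type*} [AddCommGroup Y] [Module ℝ Y]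
    [TopologicalSpace Y] [ContinuousAdd Y] [ContinuousSMul ℝ Y] {C : Set Y}
    (hint : (interior C).Nonempty) {W : Set (WeakDual ℝ Y)} (hW : IsCompact W)
    (hWC : ∀ w ∈ W, ∀ c ∈ C, 0 ≤ w c) {ε : ℝ} (hε : 0 < ε) :
    ∃ U ∈ 𝓝 (0 : Y), ∀ w ∈ W, ∀ u ∈ U, -ε ≤ w u := by
  obtain ⟨e, he⟩ := hint
  obtain ⟨M, hM1, hM⟩ := ((hW.image (WeakDual.eval_continuous e)).bddAbove).exists_ge 1
  have hM0 : 0 < M := zero_lt_one.trans_le hM1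
  have hU₀ : (e + ·) ⁻¹' C ∈ 𝓝 (0 : Y) :=
    (continuous_const_add e).continuousAt.preimage_mem_nhds
      (by simpa using mem_interior_iff_mem_nhds.1 he)
  refine ⟨(ε / M) • ((e + ·) ⁻¹' C), (set_smul_mem_nhds_zero_iff (by positivity)).2 hU₀, ?_⟩
  rintro w hw _ ⟨v, hv, rfl⟩
  have hwv : -M ≤ w v := by
    have := hWC w hw _ hv
    rw [map_add] at this
    linarith [hM _ ⟨w, hw, rfl⟩]
  calc -ε = ε / M * -M := by field_simp
    _ ≤ ε / M * w v := by gcongr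
    _ = w ((ε / M) • v) := (map_smul w _ v).symm

theorem stmt_15_general {X Y : Type*} [AddCommGroup X] [TopologicalSpace X]
    [AddCommGroup Y] [Module ℝ Y] [TopologicalSpace Y]
    [IsTopologicalAddGroup Y] [ContinuousSMul ℝ Y]
    (C : Set Y)
    (hint : (interior C).Nonempty)
    (Wstar : Set (WeakDual ℝ Y)) (hWcpt : IsCompact Wstar)
    (hWsub : ∀ w ∈ Wstar, ∀ c ∈ C, 0 ≤ w c)
    (F : X → Set Y) (x₀ : X)
    (hH : ∀ U ∈ nhds (0 : Y), ∃ V ∈ nhds (0 : X), ∀ x : X, x - x₀ ∈ V → F x ⊆ F x₀ + U) :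
    ∀ ε : ℝ, 0 < ε → ∃ V ∈ nhds (0 : X), ∀ x : X, x - x₀ ∈ V →
      ∀ w ∈ Wstar, scal w (F x₀) ≤ scal w (F x) + ((ε : ℝ) : EReal) := by
  intro ε hε
  obtain ⟨U, hU, hWU⟩ := exists_mem_nhds_zero_forall_neg_le_apply hint hWcpt hWsub hε
  obtain ⟨V, hV, hFV⟩ := hH U hU
  exact ⟨V, hV, fun x hx w hw => scal_le_scal_add_of_subset_add w (hFV x hx) (hWU w hw)⟩

theorem stmt_15 {X Y : Type*} [AddCommGroup X] [Module ℝ X] [TopologicalSpace X]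
    [IsTopologicalAddGroup X]
    [AddCommGroup Y] [Module ℝ Y] [TopologicalSpace Y]
    [IsTopologicalAddGroup Y] [ContinuousSMul ℝ Y] [LocallyConvexSpace ℝ Y] [T2Space Y]
    (C : Set Y) (hclosed : IsClosed C) (hconv : Convex ℝ C)
    (hcone : ∀ c ∈ C, ∀ r : ℝ, 0 ≤ r → r • c ∈ C)
    (hint : (interior C).Nonempty) (hCne : C ≠ Set.univ)
    (Wstar : Set (WeakDual ℝ Y)) (hWcpt : IsCompact Wstar)
    (hWsub : ∀ w ∈ Wstar, ∀ c ∈ C, 0 ≤ w c) (hW0 : (0 : WeakDual ℝ Y) ∉ Wstar)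
    (hWbase : ∀ w : WeakDual ℝ Y, (∀ c ∈ C, 0 ≤ w c) → w ≠ 0 →
      ∃ t : ℝ, 0 < t ∧ ∃ w' ∈ Wstar, w = t • w')
    (F : X → Set Y) (x₀ : X) (hx₀ : (F x₀).Nonempty)
    (hH : ∀ U ∈ nhds (0 : Y), ∃ V ∈ nhds (0 : X), ∀ x : X, x - x₀ ∈ V → F x ⊆ F x₀ + U) :
    ∀ ε : ℝ, 0 < ε → ∃ V ∈ nhds (0 : X), ∀ x : X, x - x₀ ∈ V →
      ∀ w ∈ Wstar, scal w (F x₀) ≤ scal w (F x) + ((ε : ℝ) : EReal) :=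
  stmt_15_general C hint Wstar hWcpt hWsub F x₀ hH
end

section
/- If F(x₀) + C is nonempty and convex and the family {φ_{F,w*} : w* ∈ W*} is lower equicontinuous at x₀, then the map F^C(x) = F(x) + C (with F^C(x) = ∅ when F(x) = ∅) is upper Hausdorff continuous at x₀. -/
open Pointwise Set Filter Topology

/-
Suppose `y ∈ F x + C` lies outside `(F x₀ + C) + U`. Shrink `U` to an open convex neighbourhood `S`
of `0` containing `-s • e` for an interior point `e` of `C`, and separate `y` from the open convex
set `F x₀ + C + S`. Since `C` recedes in `F x₀ + C`, the separating functional is nonnegative on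
`C`; rescaled it is some `w ∈ W*`, and the separation gives `w y + s w(e) ≤ φ_{F,w}(x₀)`, while
`φ_{F,w}(x) ≤ w y`. As `w(e)` is bounded below by some `δ > 0` on the weak*-compact base `W*`, this
contradicts lower equicontinuity with `ε < s δ` once `x` is close to `x₀`.
-/

section ConvexCone

variable {Y : Type*} [AddCommGroup Y] [Module ℝ Y] {C : Set Y}

theorem add_mem_of_convex_of_smul_mem (hconv : Convex ℝ C)
    (hcone : ∀ c ∈ C, ∀ r : ℝ, 0 ≤ r → r • c ∈ C) {c₁ c₂ : Y} (h₁ : c₁ ∈ C) (h₂ : c₂ ∈ C) :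
    c₁ + c₂ ∈ C := by
  have hmid : (1 / 2 : ℝ) • c₁ + (1 / 2 : ℝ) • c₂ ∈ C :=
    hconv h₁ h₂ (by norm_num) (by norm_num) (by norm_num)
  simpa [smul_add, smul_smul] using hcone _ hmid 2 zero_le_two

theorem add_cone_subset_of_convex_of_smul_mem (hconv : Convex ℝ C)
    (hcone : ∀ c ∈ C, ∀ r : ℝ, 0 ≤ r → r • c ∈ C) (B : Set Y) : B + C + C ⊆ B + C := by
  rw [add_assoc]
  exact add_subset_add_left <| add_subset_iff.2 fun _ h₁ _ h₂ =>
    add_mem_of_convex_of_smul_mem hconv hcone h₁ h₂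

end ConvexCone

section Functional

variable {Y : Type*} [AddCommGroup Y] [Module ℝ Y] [TopologicalSpace Y] [ContinuousAdd Y]
  [ContinuousSMul ℝ Y] {C : Set Y}

theorem exists_pos_add_smul_mem {x : Y} {s : Set Y} (hs : s ∈ 𝓝 x) (v : Y) :
    ∃ t : ℝ, 0 < t ∧ x + t • v ∈ s := by
  have hline : Tendsto (fun t : ℝ => x + t • v) (𝓝[>] 0) (𝓝 x) :=
    tendsto_nhdsWithin_of_tendsto_nhds <| by
      simpa using ((continuous_id.smul continuous_const).const_add x).tendsto (0 : ℝ)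
  obtain ⟨t, hts, ht⟩ := ((hline.eventually hs).and self_mem_nhdsWithin).exists
  exact ⟨t, ht, hts⟩

theorem WeakDual.pos_apply_of_mem_interior {w : WeakDual ℝ Y} (hwC : ∀ c ∈ C, 0 ≤ w c)
    (hw : w ≠ 0) {e : Y} (he : e ∈ interior C) : 0 < w e := by
  obtain ⟨z, hz⟩ : ∃ z, w z < 0 := by
    obtain ⟨z, hz⟩ := DFunLike.ne_iff.1 hw
    replace hz : w z ≠ 0 := hz
    rcases hz.lt_or_gt with hneg | hpos
    · exact ⟨z, hneg⟩
    · exact ⟨-z, by simpa using hpos⟩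
  obtain ⟨t, ht, hmem⟩ := exists_pos_add_smul_mem (mem_interior_iff_mem_nhds.1 he) z
  have := hwC _ hmem
  simp only [map_add, map_smul, smul_eq_mul] at this
  nlinarith

theorem exists_pos_le_apply_of_isCompact {W : Set (WeakDual ℝ Y)} (hW : IsCompact W)
    (hWC : ∀ w ∈ W, ∀ c ∈ C, 0 ≤ w c) (hW0 : (0 : WeakDual ℝ Y) ∉ W) {e : Y}
    (he : e ∈ interior C) : ∃ δ : ℝ, 0 < δ ∧ ∀ w ∈ W, δ ≤ w e :=
  hW.exists_forall_le' (WeakDual.eval_continuous e).continuousOn fun w hw =>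
    WeakDual.pos_apply_of_mem_interior (hWC w hw) (ne_of_mem_of_not_mem hw hW0) he

end Functional

theorem exists_nonneg_on_cone_separating {Y : Type*} [AddCommGroup Y] [Module ℝ Y]
    [TopologicalSpace Y] [IsTopologicalAddGroup Y] [ContinuousSMul ℝ Y]
    {A C S : Set Y} (hA : Convex ℝ A) (hAC : A + C ⊆ A)
    (hcone : ∀ c ∈ C, ∀ r : ℝ, 0 ≤ r → r • c ∈ C) (hSo : IsOpen S) (hSc : Convex ℝ S) {y : Y}
    (hy : y ∉ A + S) :
    ∃ g : Y →L[ℝ] ℝ, (∀ c ∈ C, 0 ≤ g c) ∧ ∀ a ∈ A, ∀ u ∈ S, g y < g a + g u := by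
  rcases (A + S).eq_empty_or_nonempty with hAS | ⟨_, a₀, ha₀, u₀, hu₀, rfl⟩
  · exact ⟨0, fun _ _ => le_rfl, fun a ha u hu => (notMem_empty _ (hAS ▸ add_mem_add ha hu)).elim⟩
  obtain ⟨f, hf⟩ := geometric_hahn_banach_open_point (hA.add hSc) hSo.add_left hy
  refine ⟨-f, fun c hc => ?_, fun a ha u hu => ?_⟩
  · by_contra! hfc
    simp only [neg_apply, neg_neg_iff_pos] at hfc
    have hmem (r : ℝ) (hr : 0 ≤ r) : a₀ + r • c + u₀ ∈ A + S :=
      add_mem_add (hAC (add_mem_add ha₀ (hcone c hc r hr))) hu₀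
    have := hf _ (hmem ((f y - f a₀ - f u₀) / f c) (div_nonneg ?_ hfc.le))
    · simp only [map_add, map_smul, smul_eq_mul, div_mul_cancel₀ _ hfc.ne'] at this
      linarith
    · linarith [hf _ (add_mem_add ha₀ hu₀), map_add f a₀ u₀]
  · simpa [← map_add, neg_lt_neg_iff, ← neg_add] using hf _ (add_mem_add ha hu)

section Scalarization

variable {Y : Type*} [AddCommMonoid Y] [Module ℝ Y] [TopologicalSpace Y] {w : WeakDual ℝ Y}
  {A : Set Y}

theorem le_scal {r : ℝ} (h : ∀ a ∈ A, r ≤ w a) : (r : EReal) ≤ scal w A :=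
  le_sInf <| forall_mem_image.2 fun a ha => EReal.coe_le_coe_iff.2 (h a ha)

theorem scal_le_of_mem_add {C : Set Y} (hwC : ∀ c ∈ C, 0 ≤ w c) {y : Y} (hy : y ∈ A + C) :
    scal w A ≤ w y := by
  obtain ⟨a, ha, c, hc, rfl⟩ := hy
  refine (sInf_le (mem_image_of_mem _ ha)).trans (EReal.coe_le_coe_iff.2 ?_)
  simpa using hwC c hc

theorem sub_le_scal_of_smul_lt {t : ℝ} (ht : 0 < t) {y v : Y}
    (h : ∀ a ∈ A, (t • w) y < (t • w) a + (t • w) v) : ((w y - w v : ℝ) : EReal) ≤ scal w A :=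
  le_scal fun a ha => by
    have hlt : t * w y < t * w a + t * w v := h a ha
    linarith [lt_of_mul_lt_mul_left (by linarith : t * w y < t * (w a + w v)) ht.le]

end Scalarization

theorem stmt_16_general {X Y : Type*} [AddCommGroup X] [TopologicalSpace X]
    [AddCommGroup Y] [Module ℝ Y] [TopologicalSpace Y]
    [IsTopologicalAddGroup Y] [ContinuousSMul ℝ Y] [LocallyConvexSpace ℝ Y]
    (C : Set Y) (hconv : Convex ℝ C)
    (hcone : ∀ c ∈ C, ∀ r : ℝ, 0 ≤ r → r • c ∈ C)
    (hint : (interior C).Nonempty)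
    (Wstar : Set (WeakDual ℝ Y)) (hWcpt : IsCompact Wstar)
    (hWsub : ∀ w ∈ Wstar, ∀ c ∈ C, 0 ≤ w c) (hW0 : (0 : WeakDual ℝ Y) ∉ Wstar)
    (hWbase : ∀ w : WeakDual ℝ Y, (∀ c ∈ C, 0 ≤ w c) → w ≠ 0 →
      ∃ t : ℝ, 0 < t ∧ ∃ w' ∈ Wstar, w = t • w')
    (F : X → Set Y) (x₀ : X) (hx₀ : (F x₀ + C).Nonempty) (hconvx₀ : Convex ℝ (F x₀ + C))
    (hequi : ∀ ε : ℝ, 0 < ε → ∃ V ∈ nhds (0 : X), ∀ x : X, x - x₀ ∈ V →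
      ∀ w ∈ Wstar, scal w (F x₀) ≤ scal w (F x) + ((ε : ℝ) : EReal)) :
    ∀ U ∈ nhds (0 : Y), ∃ V ∈ nhds (0 : X), ∀ x : X, x - x₀ ∈ V →
      F x + C ⊆ (F x₀ + C) + U := by
  obtain ⟨e, he⟩ := hint
  obtain ⟨δ, hδ, hδe⟩ := exists_pos_le_apply_of_isCompact hWcpt hWsub hW0 he
  intro U hU
  obtain ⟨S, ⟨hS0, hSo, hSc⟩, hSU⟩ := (LocallyConvexSpace.convex_open_basis_zero ℝ Y).mem_iff.1 hU
  obtain ⟨s, hs, hse⟩ := exists_pos_add_smul_mem (hSo.mem_nhds hS0) (-e)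
  rw [zero_add] at hse
  obtain ⟨V, hV, hVequi⟩ := hequi (s * δ / 2) (by positivity)
  refine ⟨V, hV, fun x hx y hy => by_contra fun hyU => ?_⟩
  obtain ⟨g, hgC, hgsep⟩ := exists_nonneg_on_cone_separating hconvx₀
    (add_cone_subset_of_convex_of_smul_mem hconv hcone _) hcone hSo hSc
    (fun h => hyU (add_subset_add_left hSU h))
  obtain ⟨a₀, ha₀⟩ := hx₀
  have hg0 : g ≠ 0 := by
    rintro rfl
    simpa using hgsep a₀ ha₀ 0 hS0
  obtain ⟨t, ht, w, hw, hgw⟩ := hWbase g hgC hg0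
  have h0C : (0 : Y) ∈ C := by simpa using hcone e (interior_subset he) 0 le_rfl
  have hgap := sub_le_scal_of_smul_lt ht fun a ha => by
    have hsep := hgsep (a + 0) (add_mem_add ha h0C) _ hse
    rwa [hgw, add_zero] at hsep
  have hle := hgap.trans <|
    (hVequi x hx w hw).trans (add_le_add_left (scal_le_of_mem_add (hWsub w hw) hy) _)
  rw [← EReal.coe_add, EReal.coe_le_coe_iff, map_smul, map_neg, smul_eq_mul] at hle
  linarith [mul_le_mul_of_nonneg_left (hδe w hw) hs.le, mul_pos hs hδ]

theorem stmt_16 {X Y : Type*} [AddCommGroup X] [Module ℝ X] [TopologicalSpace X]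
    [IsTopologicalAddGroup X]
    [AddCommGroup Y] [Module ℝ Y] [TopologicalSpace Y]
    [IsTopologicalAddGroup Y] [ContinuousSMul ℝ Y] [LocallyConvexSpace ℝ Y] [T2Space Y]
    (C : Set Y) (hclosed : IsClosed C) (hconv : Convex ℝ C)
    (hcone : ∀ c ∈ C, ∀ r : ℝ, 0 ≤ r → r • c ∈ C)
    (hint : (interior C).Nonempty) (hCne : C ≠ Set.univ)
    (Wstar : Set (WeakDual ℝ Y)) (hWcpt : IsCompact Wstar)
    (hWsub : ∀ w ∈ Wstar, ∀ c ∈ C, 0 ≤ w c) (hW0 : (0 : WeakDual ℝ Y) ∉ Wstar)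
    (hWbase : ∀ w : WeakDual ℝ Y, (∀ c ∈ C, 0 ≤ w c) → w ≠ 0 →
      ∃ t : ℝ, 0 < t ∧ ∃ w' ∈ Wstar, w = t • w')
    (F : X → Set Y) (x₀ : X) (hx₀ : (F x₀ + C).Nonempty) (hconvx₀ : Convex ℝ (F x₀ + C))
    (hequi : ∀ ε : ℝ, 0 < ε → ∃ V ∈ nhds (0 : X), ∀ x : X, x - x₀ ∈ V →
      ∀ w ∈ Wstar, scal w (F x₀) ≤ scal w (F x) + ((ε : ℝ) : EReal)) :
    ∀ U ∈ nhds (0 : Y), ∃ V ∈ nhds (0 : X), ∀ x : X, x - x₀ ∈ V →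
      F x + C ⊆ (F x₀ + C) + U :=
  stmt_16_general C hconv hcone hint Wstar hWcpt hWsub hW0 hWbase F x₀ hx₀ hconvx₀ hequi
end

section
/- If A ⊆ Y is compact and nonempty, and w*ᵢ → w*₀ weakly* in a weak*-compact base W* of C⁺, then inf_{a∈A} w*ᵢ(a) → inf_{a∈A} w*₀(a). In particular the map w* ↦ inf_{a∈A} w*(a) is weak*-continuous on W* (it is concave and weak* upper semicontinuous, and lower semicontinuity follows from compactness of A). -/
open Pointwise Set Filter Topology

/-!
Every `w ∈ W*` is nonnegative on `C`, so `|w v| ≤ w e` whenever `e ± v ∈ C`. Taking `e` interior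
to `C` and bounding `w ↦ w e` on the compact set `W*` shows that the functionals of `W*` are
uniformly bounded on a neighbourhood of `0`, i.e. `W*` is equicontinuous. On an equicontinuous
family, pointwise (weak*) convergence makes the evaluation `(w, a) ↦ w a` jointly continuous, and
the infimum over a compact set of a jointly continuous function is continuous in the parameter.
-/

theorem Equicontinuous.continuous_uncurry {ι X α : Type*} [TopologicalSpace ι]
    [TopologicalSpace X] [UniformSpace α] {F : ι → X → α} (hF : Equicontinuous F)
    (hF' : ∀ x, Continuous fun i => F i x) : Continuous fun p : ι × X => F p.1 p.2 := by
  refine continuous_iff_continuousAt.2 fun ⟨i₀, x₀⟩ => Uniform.tendsto_nhds_right.2 ?_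
  intro U hU
  obtain ⟨V, hV, hVU⟩ := comp_mem_uniformity_sets hU
  have near_i₀ : ∀ᶠ i in 𝓝 i₀, (F i₀ x₀, F i x₀) ∈ V :=
    Uniform.tendsto_nhds_right.1 ((hF' x₀).tendsto i₀) hV
  rw [nhds_prod_eq, mem_map]
  filter_upwards [near_i₀.prod_mk (hF x₀ V hV)] with p ⟨hi, hx⟩
  exact hVU ⟨_, hi, hx p.1⟩

theorem abs_apply_le_of_add_mem_of_sub_mem {E hom : Type*} [AddCommGroup E] [FunLike hom E ℝ]
    [AddMonoidHomClass hom E ℝ] {C : Set E} {f : hom} (hf : ∀ c ∈ C, 0 ≤ f c) {e v : E}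
    (hadd : e + v ∈ C) (hsub : e - v ∈ C) : |f v| ≤ f e := by
  have h₁ := hf _ hadd
  have h₂ := hf _ hsub
  rw [map_add] at h₁
  rw [map_sub] at h₂
  exact abs_le.2 ⟨by linarith, by linarith⟩

theorem equicontinuous_of_abs_le_one {ι E hom : Type*} [AddCommGroup E] [Module ℝ E]
    [TopologicalSpace E] [IsTopologicalAddGroup E] [ContinuousSMul ℝ E] [FunLike hom E ℝ]
    [LinearMapClass hom ℝ E ℝ] (F : ι → hom) {V : Set E} (hV : V ∈ 𝓝 0)
    (hF : ∀ i, ∀ v ∈ V, |F i v| ≤ 1) : Equicontinuous (DFunLike.coe ∘ F) := by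
  refine equicontinuous_of_equicontinuousAt_zero F (Metric.equicontinuousAt_iff_right.2 ?_)
  intro ε hε
  have hδ : ε / 2 ≠ 0 := by positivity
  filter_upwards [(set_smul_mem_nhds_zero_iff hδ).2 hV]
  rintro _ ⟨v, hv, rfl⟩ i
  have hFv := hF i v hv
  simp only [Function.comp_apply, map_zero, map_smul, smul_eq_mul, Real.dist_eq, zero_sub,
    abs_neg, abs_mul, abs_of_pos (half_pos hε)]
  nlinarith

theorem exists_mem_nhds_zero_abs_le_one_of_nonneg {Y : Type*} [AddCommGroup Y] [Module ℝ Y]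
    [TopologicalSpace Y] [IsTopologicalAddGroup Y] [ContinuousSMul ℝ Y] {C : Set Y}
    (hC : (interior C).Nonempty) {W : Set (WeakDual ℝ Y)} (hW : IsCompact W)
    (hWC : ∀ w ∈ W, ∀ c ∈ C, 0 ≤ w c) : ∃ V ∈ 𝓝 (0 : Y), ∀ w ∈ W, ∀ v ∈ V, |w v| ≤ 1 := by
  obtain ⟨e, he⟩ := hC
  obtain ⟨M, hM⟩ := hW.bddAbove_image (WeakDual.eval_continuous e).continuousOn
  set M' := max M 1
  have hM' : 0 < M' := lt_max_of_lt_right one_pos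
  have hC_nhds : C ∈ 𝓝 e := mem_interior_iff_mem_nhds.1 he
  have hadd : Tendsto (fun v : Y => e + M' • v) (𝓝 0) (𝓝 e) :=
    (continuous_const.add (continuous_const_smul M')).tendsto' 0 e (by simp)
  have hsub : Tendsto (fun v : Y => e - M' • v) (𝓝 0) (𝓝 e) :=
    (continuous_const.sub (continuous_const_smul M')).tendsto' 0 e (by simp)
  refine ⟨_, inter_mem (hadd hC_nhds) (hsub hC_nhds), fun w hw v ⟨hv₁, hv₂⟩ => ?_⟩
  have hwv := abs_apply_le_of_add_mem_of_sub_mem (hWC w hw) hv₁ hv₂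
  have hwe : w e ≤ M' := (hM ⟨w, hw, rfl⟩).trans (le_max_left _ _)
  rw [map_smul, smul_eq_mul, abs_mul, abs_of_pos hM'] at hwv
  nlinarith

theorem continuousOn_scal {Y : Type*} [AddCommGroup Y] [Module ℝ Y] [TopologicalSpace Y]
    {W : Set (WeakDual ℝ Y)} (hW : Equicontinuous fun w : W => ⇑(w : WeakDual ℝ Y))
    {A : Set Y} (hA : IsCompact A) : ContinuousOn (fun w => scal w A) W := by
  rw [continuousOn_iff_continuous_domRestrict]
  refine hA.continuous_sInf (f := fun (w : W) (a : Y) => ((w : WeakDual ℝ Y) a : EReal)) ?_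
  exact continuous_coe_real_ereal.comp <| hW.continuous_uncurry fun a =>
    (WeakDual.eval_continuous a).comp continuous_subtype_val

theorem stmt_17_general {Y : Type*}
    [AddCommGroup Y] [Module ℝ Y] [TopologicalSpace Y]
    [IsTopologicalAddGroup Y] [ContinuousSMul ℝ Y]
    (C : Set Y)
    (hint : (interior C).Nonempty)
    (Wstar : Set (WeakDual ℝ Y)) (hWcpt : IsCompact Wstar)
    (hWsub : ∀ w ∈ Wstar, ∀ c ∈ C, 0 ≤ w c)
    (A : Set Y) (hAcpt : IsCompact A)
    {ι : Type*} (l : Filter ι) (w : ι → WeakDual ℝ Y) (w₀ : WeakDual ℝ Y)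
    (hw : ∀ i, w i ∈ Wstar) (hw₀ : w₀ ∈ Wstar) (hconvw : Filter.Tendsto w l (nhds w₀)) :
    Filter.Tendsto (fun i => scal (w i) A) l (nhds (scal w₀ A)) ∧
      ContinuousOn (fun w' : WeakDual ℝ Y => scal w' A) Wstar := by
  obtain ⟨V, hV, hbound⟩ := exists_mem_nhds_zero_abs_le_one_of_nonneg hint hWcpt hWsub
  have hequi : Equicontinuous fun w' : Wstar => ⇑(w' : WeakDual ℝ Y) :=
    equicontinuous_of_abs_le_one (fun w' : Wstar => (w' : WeakDual ℝ Y)) hV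
      fun w' => hbound w' w'.2
  have hcont := continuousOn_scal hequi hAcpt
  exact ⟨(hcont w₀ hw₀).tendsto.comp (tendsto_nhdsWithin_iff.2 ⟨hconvw, .of_forall hw⟩), hcont⟩

theorem stmt_17 {Y : Type*}
    [AddCommGroup Y] [Module ℝ Y] [TopologicalSpace Y]
    [IsTopologicalAddGroup Y] [ContinuousSMul ℝ Y] [LocallyConvexSpace ℝ Y] [T2Space Y]
    (C : Set Y) (hclosed : IsClosed C) (hconv : Convex ℝ C)
    (hcone : ∀ c ∈ C, ∀ r : ℝ, 0 ≤ r → r • c ∈ C)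
    (hint : (interior C).Nonempty) (hCne : C ≠ Set.univ)
    (Wstar : Set (WeakDual ℝ Y)) (hWcpt : IsCompact Wstar)
    (hWsub : ∀ w ∈ Wstar, ∀ c ∈ C, 0 ≤ w c) (hW0 : (0 : WeakDual ℝ Y) ∉ Wstar)
    (hWbase : ∀ w : WeakDual ℝ Y, (∀ c ∈ C, 0 ≤ w c) → w ≠ 0 →
      ∃ t : ℝ, 0 < t ∧ ∃ w' ∈ Wstar, w = t • w')
    (A : Set Y) (hAcpt : IsCompact A) (hAne : A.Nonempty)
    {ι : Type*} (l : Filter ι) [l.NeBot] (w : ι → WeakDual ℝ Y) (w₀ : WeakDual ℝ Y)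
    (hw : ∀ i, w i ∈ Wstar) (hw₀ : w₀ ∈ Wstar) (hconvw : Filter.Tendsto w l (nhds w₀)) :
    Filter.Tendsto (fun i => scal (w i) A) l (nhds (scal w₀ A)) ∧
      ContinuousOn (fun w' : WeakDual ℝ Y => scal w' A) Wstar :=
  stmt_17_general C hint Wstar hWcpt hWsub A hAcpt l w w₀ hw hw₀ hconvw
end
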